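/- Suppose τ_{a,1} = … = τ_{a,r} and τ_{b,1} = … = τ_{b,r} (all positive), so that τ_{a,1}·τ_{b,1}, …, τ_{a,r}·τ_{b,r} are all equal. Then an invertible W satisfies both (i) T_a^{-1/2} W T_a^{1/2} is orthogonal and (ii) T_b^{1/2} W T_b^{-1/2} is orthogonal, together with the commutation relations of Theorem 1, if and only if W is orthogonal; that is, W = T_a^{1/2} Q T_a^{-1/2} = Q for orthogonal Q, and the invariance group is exactly the orthogonal group O(r). -/
import Mathlib

open Matrix

lemma diag_const {r : ℕ} (c : ℝ) :
    diagonal (fun _ : Fin r => c) = c • (1 : Matrix (Fin r) (Fin r) ℝ) := by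
  ext i j
  by_cases h : i = j <;> simp [h, Matrix.one_apply]

lemma conj_const {r : ℕ} (c : ℝ) (hc : c ≠ 0) (W : Matrix (Fin r) (Fin r) ℝ) :
    (c⁻¹ • (1 : Matrix (Fin r) (Fin r) ℝ)) * W * (c • 1) = W := by
  rw [Matrix.smul_mul, Matrix.mul_smul, one_mul, mul_one, smul_smul,
    mul_inv_cancel₀ hc, one_smul]

theorem stmt_9 {r : ℕ} (τa τb : Fin r → ℝ) (hτa : ∀ k, 0 < τa k) (hτb : ∀ k, 0 < τb k)
    (ha : ∀ k k', τa k = τa k') (hb : ∀ k k', τb k = τb k')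
    (W : Matrix (Fin r) (Fin r) ℝ) (hW : IsUnit W) :
    (((diagonal (fun k => (Real.sqrt (τa k))⁻¹) * W * diagonal (fun k => Real.sqrt (τa k)))ᵀ *
        (diagonal (fun k => (Real.sqrt (τa k))⁻¹) * W * diagonal (fun k => Real.sqrt (τa k))) = 1) ∧
      ((diagonal (fun k => Real.sqrt (τb k)) * W * diagonal (fun k => (Real.sqrt (τb k))⁻¹))ᵀ *
        (diagonal (fun k => Real.sqrt (τb k)) * W * diagonal (fun k => (Real.sqrt (τb k))⁻¹)) = 1) ∧
      W * diagonal τa = diagonal τa * (W⁻¹)ᵀ ∧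
      diagonal τb * W = (W⁻¹)ᵀ * diagonal τb) ↔
    Wᵀ * W = 1 := by
  rcases Nat.eq_zero_or_pos r with h0 | h0
  · subst h0
    have : ∀ A B : Matrix (Fin 0) (Fin 0) ℝ, A = B := fun A B => by
      ext i; exact i.elim0
    exact ⟨fun _ => this _ _, fun _ => ⟨this _ _, this _ _, this _ _, this _ _⟩⟩
  · set k0 : Fin r := ⟨0, h0⟩
    have hτa' : τa = fun _ => τa k0 := funext fun k => ha k k0
    have hτb' : τb = fun _ => τb k0 := funext fun k => hb k k0
    have hsa : Real.sqrt (τa k0) ≠ 0 := (Real.sqrt_pos.2 (hτa k0)).ne'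
    have hsb : Real.sqrt (τb k0) ≠ 0 := (Real.sqrt_pos.2 (hτb k0)).ne'
    have hDa : diagonal (fun k => (Real.sqrt (τa k))⁻¹) * W * diagonal (fun k => Real.sqrt (τa k)) = W := by
      rw [hτa']
      rw [show (fun k : Fin r => (Real.sqrt (τa k0))⁻¹) = fun _ : Fin r => (Real.sqrt (τa k0))⁻¹ from rfl]
      rw [diag_const, diag_const]
      exact conj_const _ hsa W
    have hDb : diagonal (fun k => Real.sqrt (τb k)) * W * diagonal (fun k => (Real.sqrt (τb k))⁻¹) = W := by
      rw [hτb', diag_const, diag_const]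
      have := conj_const (Real.sqrt (τb k0))⁻¹ (inv_ne_zero hsb) W
      rw [inv_inv] at this
      exact this
    have key : Wᵀ * W = 1 → W = (W⁻¹)ᵀ := by
      intro h
      have hinv : W⁻¹ = Wᵀ := Matrix.inv_eq_left_inv h
      rw [hinv, Matrix.transpose_transpose]
    constructor
    · rintro ⟨h1, -, -, -⟩
      rwa [hDa] at h1
    · intro h
      have hw : W = (W⁻¹)ᵀ := key h
      refine ⟨by rwa [hDa], by rwa [hDb], ?_, ?_⟩
      · rw [hτa', diag_const, Matrix.mul_smul, Matrix.smul_mul, mul_one, one_mul, ← hw]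
      · rw [hτb', diag_const, Matrix.mul_smul, Matrix.smul_mul, mul_one, one_mul, ← hw]
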